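/- Let $n \ge 2$, let $R_i, C_j$ be real numbers, let $M = \max\{\max_i(-R_i/(n-1)), \max_i(-C_i/(n-1))\}$, assume $M > \ln 2$, and let $\varepsilon > 0$ satisfy $\psi(2\varepsilon) - \psi(\varepsilon) = M$. Define $g_i(a,b) = \psi^{-1}\big(\tfrac{R_i}{n-1} + \tfrac{1}{n-1}\sum_{j\ne i}\psi(a_i + b_j)\big)$ and $h_j(a,b) = \psi^{-1}\big(\tfrac{C_j}{n-1} + \tfrac{1}{n-1}\sum_{i\ne j}\psi(a_i + b_j)\big)$. Then evaluating at the constant vector $(\varepsilon, \dots, \varepsilon)$, we have $g_i(\varepsilon \mathbf{1}) \ge \varepsilon$ and $h_j(\varepsilon \mathbf{1}) \ge \varepsilon$ for all $i, j$. -/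

import Mathlib

open Finset

/-- The digamma function `ψ = Γ'/Γ`, as the derivative of `log ∘ Γ` on `(0,∞)`. -/
noncomputable def digamma (x : ℝ) : ℝ := deriv (fun y => Real.log (Real.Gamma y)) x

/-- The inverse of the digamma function on `(0,∞)`. -/
noncomputable def digammaInv (y : ℝ) : ℝ := Function.invFunOn digamma (Set.Ioi 0) y

/-!
At the constant vector every sum in `g` and `h` consists of `n - 1` copies of `ψ(2ε)`, so
`gᵢ(ε𝟏) = ψ⁻¹(Rᵢ/(n-1) + ψ(2ε))`. Since `-Rᵢ/(n-1) ≤ M = ψ(2ε) - ψ(ε)`, the argument is at least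
`ψ(ε)`, and `ψ⁻¹` is monotone because `ψ` is a strictly increasing bijection `(0,∞) → ℝ`:
increasing as the derivative of the convex function `log Γ`, strictly so by `ψ(x+1) = ψ(x) + 1/x`,
and onto by the mean value theorem on `[eᵗ, eᵗ + 1]`, where `log Γ` increases by `log eᵗ = t`.
-/

lemma hasDerivAt_log_Gamma {x : ℝ} (hx : 0 < x) :
    HasDerivAt (fun y => Real.log (Real.Gamma y)) (digamma x) x := by
  have hΓ : DifferentiableAt ℝ Real.Gamma x :=
    Real.differentiableAt_Gamma fun m hm => by
      have : (0 : ℝ) ≤ m := m.cast_nonneg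
      linarith
  exact (hΓ.log (Real.Gamma_pos_of_pos hx).ne').hasDerivAt

lemma digamma_monotoneOn : MonotoneOn digamma (Set.Ioi 0) :=
  Real.convexOn_log_Gamma.monotoneOn_deriv fun _ hx => (hasDerivAt_log_Gamma hx).differentiableAt

lemma digamma_add_one {x : ℝ} (hx : 0 < x) : digamma (x + 1) = digamma x + 1 / x := by
  have hshift : HasDerivAt (fun y => Real.log (Real.Gamma (y + 1))) (digamma (x + 1)) x := by
    simpa using (hasDerivAt_log_Gamma (by linarith : (0 : ℝ) < x + 1)).comp_add_const x 1
  have hsplit : HasDerivAt (fun y => Real.log y + Real.log (Real.Gamma y))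
      (1 / x + digamma x) x := by
    simpa [one_div, Pi.add_def] using (Real.hasDerivAt_log hx.ne').add (hasDerivAt_log_Gamma hx)
  have heq : (fun y => Real.log (Real.Gamma (y + 1)))
      =ᶠ[nhds x] fun y => Real.log y + Real.log (Real.Gamma y) := by
    filter_upwards [eventually_gt_nhds hx] with y hy
    rw [Real.Gamma_add_one hy.ne', Real.log_mul hy.ne' (Real.Gamma_pos_of_pos hy).ne']
  rw [hshift.unique (hsplit.congr_of_eventuallyEq heq), add_comm]

lemma digamma_strictMonoOn : StrictMonoOn digamma (Set.Ioi 0) := by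
  intro x hx y hy hxy
  by_contra! hle
  have hmono : digamma (x + 1) ≤ digamma (y + 1) :=
    digamma_monotoneOn (by simp only [Set.mem_Ioi] at *; linarith)
      (by simp only [Set.mem_Ioi] at *; linarith) (by linarith)
  have hrecip : 1 / y < 1 / x := one_div_lt_one_div_of_lt hx hxy
  rw [digamma_add_one hx, digamma_add_one hy] at hmono
  linarith

lemma exists_pos_digamma_eq (t : ℝ) : ∃ x, 0 < x ∧ digamma x = t := by
  set a := Real.exp t
  have ha : 0 < a := Real.exp_pos t
  obtain ⟨c, hc, hslope⟩ := exists_hasDerivAt_eq_slope (fun y => Real.log (Real.Gamma y)) digamma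
    (lt_add_one a)
    (fun y hy => (hasDerivAt_log_Gamma (ha.trans_le hy.1)).continuousAt.continuousWithinAt)
    (fun y hy => hasDerivAt_log_Gamma (ha.trans hy.1))
  refine ⟨c, ha.trans hc.1, ?_⟩
  rw [hslope, Real.Gamma_add_one ha.ne', Real.log_mul ha.ne' (Real.Gamma_pos_of_pos ha).ne']
  simp [a]

lemma digammaInv_pos (t : ℝ) : 0 < digammaInv t := by
  obtain ⟨x, hx, hxt⟩ := exists_pos_digamma_eq t
  exact Function.invFunOn_mem ⟨x, hx, hxt⟩

lemma digamma_digammaInv (t : ℝ) : digamma (digammaInv t) = t := by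
  obtain ⟨x, hx, hxt⟩ := exists_pos_digamma_eq t
  exact Function.invFunOn_eq ⟨x, hx, hxt⟩

lemma le_digammaInv_iff {x : ℝ} (hx : 0 < x) (t : ℝ) : x ≤ digammaInv t ↔ digamma x ≤ t := by
  rw [← digamma_strictMonoOn.le_iff_le hx (digammaInv_pos t), digamma_digammaInv]

lemma sum_sdiff_singleton_const {n : ℕ} (i : Fin n) (c : ℝ) :
    ∑ _j ∈ univ \ {i}, c = ((n : ℝ) - 1) * c := by
  rw [sum_const, card_sdiff_of_subset (subset_univ _), card_univ, Fintype.card_fin,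
    card_singleton, nsmul_eq_mul, Nat.cast_sub (Nat.one_le_of_lt i.isLt), Nat.cast_one]

theorem fixed_point_map_ge_eps_general (n : ℕ) (hn : 2 ≤ n) (R C : Fin n → ℝ)
    (M : ℝ) (hne : (univ : Finset (Fin n)).Nonempty)
    (hM : M = max ((univ : Finset (Fin n)).sup' hne (fun i => -R i / (n - 1)))
      ((univ : Finset (Fin n)).sup' hne (fun i => -C i / (n - 1))))
    (ε : ℝ) (hε : 0 < ε) (hεM : digamma (2 * ε) - digamma ε = M)
    (g h : (Fin n → ℝ) → (Fin n → ℝ) → Fin n → ℝ)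
    (hg : ∀ a b i, g a b i =
      digammaInv (R i / (n - 1) + (1 / (n - 1)) * ∑ j ∈ univ \ {i}, digamma (a i + b j)))
    (hh : ∀ a b j, h a b j =
      digammaInv (C j / (n - 1) + (1 / (n - 1)) * ∑ i ∈ univ \ {j}, digamma (a i + b j))) :
    (∀ i, ε ≤ g (fun _ => ε) (fun _ => ε) i) ∧
    (∀ j, ε ≤ h (fun _ => ε) (fun _ => ε) j) := by
  have hn1 : (0 : ℝ) < n - 1 := by
    have : (2 : ℝ) ≤ n := by exact_mod_cast hn
    linarith
  have key : ∀ (r : ℝ) (i : Fin n), -r / (n - 1) ≤ M →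
      ε ≤ digammaInv (r / (n - 1) + (1 / (n - 1)) * ∑ _j ∈ univ \ {i}, digamma (ε + ε)) := by
    intro r i hr
    rw [le_digammaInv_iff hε, sum_sdiff_singleton_const, one_div, inv_mul_cancel_left₀ hn1.ne',
      ← two_mul]
    rw [neg_div] at hr
    linarith
  refine ⟨fun i => ?_, fun j => ?_⟩
  · rw [hg]
    exact key (R i) i <|
      hM ▸ le_max_of_le_left (le_sup' (fun i => -R i / ((n : ℝ) - 1)) (mem_univ i))
  · rw [hh]
    exact key (C j) j <|
      hM ▸ le_max_of_le_right (le_sup' (fun i => -C i / ((n : ℝ) - 1)) (mem_univ j))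

theorem fixed_point_map_ge_eps (n : ℕ) (hn : 2 ≤ n) (R C : Fin n → ℝ)
    (M : ℝ) (hne : (univ : Finset (Fin n)).Nonempty)
    (hM : M = max ((univ : Finset (Fin n)).sup' hne (fun i => -R i / (n - 1)))
      ((univ : Finset (Fin n)).sup' hne (fun i => -C i / (n - 1))))
    (hMgt : Real.log 2 < M)
    (ε : ℝ) (hε : 0 < ε) (hεM : digamma (2 * ε) - digamma ε = M)
    (g h : (Fin n → ℝ) → (Fin n → ℝ) → Fin n → ℝ)
    (hg : ∀ a b i, g a b i =
      digammaInv (R i / (n - 1) + (1 / (n - 1)) * ∑ j ∈ univ \ {i}, digamma (a i + b j)))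
    (hh : ∀ a b j, h a b j =
      digammaInv (C j / (n - 1) + (1 / (n - 1)) * ∑ i ∈ univ \ {j}, digamma (a i + b j))) :
    (∀ i, ε ≤ g (fun _ => ε) (fun _ => ε) i) ∧
    (∀ j, ε ≤ h (fun _ => ε) (fun _ => ε) j) :=
  fixed_point_map_ge_eps_general n hn R C M hne hM ε hε hεM g h hg hh
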